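/- Let $u: I \times \mathbb{R}^4 \to \mathbb{C}$ with $u \in L_t^\infty \dot{H}^{s_c}_x$, $1 < s_c < 2$, and suppose that for some constants $C(u), N_0 > 0$ and all $N < N_0$, $\inf_{t \in I} N(t)^{2s_c}\int_{|x| \leq C(u)/N(t)} |u_{>N}(t,x)|^2\,dx \gtrsim_u 1$, where $N(t) \geq 1$. Then $\int_I \int_{\mathbb{R}^4} \frac{|u_{>N}(t,x)|^{\alpha+2}}{|x|^{1+b}}\,dx\,dt \gtrsim_u \int_I N(t)^{3-2s_c}\,dt$, where $s_c = 2 - (2-b)/\alpha$. -/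

import Mathlib

open MeasureTheory
open scoped ENNReal

-- real exponent identity
lemma real_id (c₁ k Cu Nt s_c α b : ℝ) (hc₁ : 0 < c₁) (hk : 0 < k) (hCu : 0 < Cu)
    (hNt : 0 < Nt) (hα : 0 < α) (hb : 0 < b) (hrel : s_c * α = 2 * α - 2 + b) :
    c₁ ^ ((α+2)/2) * k ^ (-(α/2)) * Cu ^ (-(2*α+1+b)) * Nt ^ (3 - 2*s_c)
      = (c₁ / (Nt ^ (2*s_c) * ((Cu/Nt) ^ (4:ℕ) * k) ^ (α/(α+2)))) ^ ((α+2)/2)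
          / (Cu/Nt) ^ (1+b) := by
  have hR : 0 < Cu / Nt := div_pos hCu hNt
  have h1 : (0:ℝ) < Nt ^ (2*s_c) * ((Cu/Nt) ^ (4:ℕ) * k) ^ (α/(α+2)) := by positivity
  have hL : (0:ℝ) < c₁ ^ ((α+2)/2) * k ^ (-(α/2)) * Cu ^ (-(2*α+1+b)) * Nt ^ (3 - 2*s_c) := by
    positivity
  have hRp : (0:ℝ) < (c₁ / (Nt ^ (2*s_c) * ((Cu/Nt) ^ (4:ℕ) * k) ^ (α/(α+2)))) ^ ((α+2)/2)
      / (Cu/Nt) ^ (1+b) := by positivity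
  rw [← Real.exp_log hL, ← Real.exp_log hRp]
  congr 1
  rw [Real.log_mul (by positivity) (by positivity), Real.log_mul (by positivity) (by positivity),
    Real.log_mul (by positivity) (by positivity), Real.log_rpow hc₁, Real.log_rpow hk,
    Real.log_rpow hCu, Real.log_rpow hNt,
    Real.log_div (by positivity) (by positivity), Real.log_rpow (by positivity),
    Real.log_div (by positivity) (by positivity),
    Real.log_mul (by positivity) (by positivity), Real.log_rpow hNt,
    Real.log_rpow (by positivity), Real.log_mul (by positivity) (by positivity),
    Real.log_pow, Real.log_div (by positivity) (by positivity), Real.log_rpow hR,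
    Real.log_div (by positivity) (by positivity)]
  have hα2 : α + 2 ≠ 0 := by positivity
  field_simp
  ring_nf
  linear_combination (2 * Real.log Nt) * hrel

noncomputable def kball : ℝ :=
  (volume (Metric.ball (0 : EuclideanSpace ℝ (Fin 4)) 1)).toReal

lemma kball_pos : 0 < kball :=
  ENNReal.toReal_pos (Metric.measure_ball_pos volume 0 one_pos).ne' measure_ball_lt_top.ne

lemma kball_eq : volume (Metric.ball (0 : EuclideanSpace ℝ (Fin 4)) 1) = ENNReal.ofReal kball :=
  (ENNReal.ofReal_toReal measure_ball_lt_top.ne).symm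

lemma aux_t (s_c b α : ℝ) (hb : 0 < b) (hα : 0 < α) (hrel : s_c * α = 2 * α - 2 + b)
    (Cu c₁ Nt : ℝ) (hCu : 0 < Cu) (hc₁ : 0 < c₁) (hNt : 1 ≤ Nt)
    (f : EuclideanSpace ℝ (Fin 4) → ℂ)
    (hm : ENNReal.ofReal c₁ ≤ ENNReal.ofReal (Nt ^ (2 * s_c)) *
      ∫⁻ x in {x : EuclideanSpace ℝ (Fin 4) | ‖x‖ ≤ Cu / Nt},
        ENNReal.ofReal (‖f x‖ ^ 2)) :
    ENNReal.ofReal (c₁ ^ ((α+2)/2) * kball ^ (-(α/2)) * Cu ^ (-(2*α+1+b)) * Nt ^ (3 - 2*s_c))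
      ≤ ∫⁻ x, ENNReal.ofReal (‖f x‖ ^ (α + 2) / ‖x‖ ^ (1 + b)) := by
  have hNt0 : (0:ℝ) < Nt := lt_of_lt_of_le one_pos hNt
  have hR : (0:ℝ) < Cu / Nt := div_pos hCu hNt0
  set R : ℝ := Cu / Nt with hRdef
  set S : Set (EuclideanSpace ℝ (Fin 4)) := Metric.closedBall 0 R with hSdef
  have hSet : {x : EuclideanSpace ℝ (Fin 4) | ‖x‖ ≤ Cu / Nt} = S := by
    ext x; simp [hSdef, mem_closedBall_zero_iff, hRdef]
  rw [hSet] at hm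
  have hk := kball_pos
  have hVol : volume S = ENNReal.ofReal (R ^ (4:ℕ) * kball) := by
    rw [hSdef, Measure.addHaar_closedBall _ _ hR.le, kball_eq,
      ← ENNReal.ofReal_mul (by positivity)]
    congr 2
    simp [finrank_euclideanSpace]
  set p : ℝ := (α + 2) / 2 with hpdef
  set q : ℝ := (α + 2) / α with hqdef
  have hp0 : 0 < p := by positivity
  have hpq : p.HolderConjugate q := by
    refine Real.holderConjugate_iff.mpr ⟨?_, ?_⟩
    · rw [hpdef, lt_div_iff₀ (by norm_num : (0:ℝ) < 2)]; linarith
    · rw [hpdef, hqdef]; field_simp; ring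
  have h1q : 1 / q = α / (α + 2) := by rw [hqdef, one_div_div]
  set A : ℝ≥0∞ := ∫⁻ x in S, ENNReal.ofReal (‖f x‖ ^ (α + 2)) with hAdef
  -- Hölder
  obtain ⟨g, hgm, hgle, hgeq⟩ := exists_measurable_le_lintegral_eq (volume.restrict S)
    (fun x => ENNReal.ofReal (‖f x‖ ^ 2))
  have holder := ENNReal.lintegral_mul_le_Lp_mul_Lq (volume.restrict S) hpq
    hgm.aemeasurable (aemeasurable_const (b := (1:ℝ≥0∞)))
  simp only [Pi.mul_apply, mul_one, ENNReal.one_rpow, lintegral_one,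
    Measure.restrict_apply_univ] at holder
  have hgp : ∫⁻ a in S, g a ^ p ≤ A := by
    refine lintegral_mono fun x => ?_
    calc g x ^ p ≤ (ENNReal.ofReal (‖f x‖ ^ 2)) ^ p :=
          ENNReal.rpow_le_rpow (hgle x) hp0.le
      _ = ENNReal.ofReal ((‖f x‖ ^ 2) ^ p) :=
          ENNReal.ofReal_rpow_of_nonneg (by positivity) hp0.le
      _ = ENNReal.ofReal (‖f x‖ ^ (α + 2)) := by
          rw [← Real.rpow_natCast ‖f x‖ 2,
            ← Real.rpow_mul (norm_nonneg _)]
          norm_num [hpdef]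
          rw [show (2:ℝ) * ((α + 2) / 2) = α + 2 by ring]
  have hM : ∫⁻ x in S, ENNReal.ofReal (‖f x‖ ^ 2) ≤
      A ^ (1/p) * (volume S) ^ (1/q) := by
    rw [hgeq]
    exact holder.trans (mul_le_mul_left
      (ENNReal.rpow_le_rpow hgp (by positivity)) _)
  -- combine with mass bound
  set w : ℝ := Nt ^ (2 * s_c) * (R ^ (4:ℕ) * kball) ^ (α / (α + 2)) with hwdef
  have hw : (0:ℝ) < w := by positivity
  have hmain : ENNReal.ofReal c₁ ≤ A ^ (1/p) * ENNReal.ofReal w := by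
    calc ENNReal.ofReal c₁
        ≤ ENNReal.ofReal (Nt ^ (2 * s_c)) * (A ^ (1/p) * (volume S) ^ (1/q)) :=
          hm.trans (mul_le_mul_right hM _)
      _ = A ^ (1/p) * ENNReal.ofReal w := by
          rw [hVol, ENNReal.ofReal_rpow_of_nonneg (by positivity) (by positivity),
            hwdef, ENNReal.ofReal_mul (by positivity), h1q]
          ring
  have hA : ENNReal.ofReal ((c₁ / w) ^ p) ≤ A := by
    have h1 : ENNReal.ofReal c₁ / ENNReal.ofReal w ≤ A ^ (1/p) :=
      (ENNReal.div_le_iff_le_mul (Or.inl (by simp [hw])) (Or.inl ENNReal.ofReal_ne_top)).mpr hmain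
    have h2 : (ENNReal.ofReal c₁ / ENNReal.ofReal w) ^ p ≤ (A ^ (1/p)) ^ p :=
      ENNReal.rpow_le_rpow h1 hp0.le
    rw [← ENNReal.rpow_mul, one_div_mul_cancel hp0.ne', ENNReal.rpow_one] at h2
    rw [← ENNReal.ofReal_rpow_of_nonneg (by positivity) hp0.le, ENNReal.ofReal_div_of_pos hw]
    exact h2
  -- pointwise weight bound
  have hstep : ENNReal.ofReal ((R ^ (1+b))⁻¹) * A ≤
      ∫⁻ x in S, ENNReal.ofReal (‖f x‖ ^ (α + 2) / ‖x‖ ^ (1 + b)) := by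
    calc ENNReal.ofReal ((R ^ (1+b))⁻¹) * A
        ≤ ∫⁻ x in S, ENNReal.ofReal ((R ^ (1+b))⁻¹) *
            ENNReal.ofReal (‖f x‖ ^ (α + 2)) := lintegral_const_mul_le _ _
      _ ≤ _ := by
          refine lintegral_mono_ae ?_
          have h0 : ∀ᵐ x ∂(volume.restrict S), x ≠ (0 : EuclideanSpace ℝ (Fin 4)) := by
            refine ae_restrict_of_ae ?_
            rw [ae_iff]
            have hz : volume ({(0 : EuclideanSpace ℝ (Fin 4))} : Set (EuclideanSpace ℝ (Fin 4))) = 0 := by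
              have h1 : ({(0 : EuclideanSpace ℝ (Fin 4))} : Set (EuclideanSpace ℝ (Fin 4))) ⊆
                  Metric.closedBall (0 : EuclideanSpace ℝ (Fin 4)) 0 := by
                intro y hy; simp_all
              have h2 : volume (Metric.closedBall (0 : EuclideanSpace ℝ (Fin 4)) 0) = 0 := by
                rw [Measure.addHaar_closedBall _ (0 : EuclideanSpace ℝ (Fin 4)) le_rfl]
                simp [finrank_euclideanSpace]
              exact le_antisymm (h2 ▸ measure_mono h1) zero_le
            convert hz using 2
            ext x; simp
          filter_upwards [h0, ae_restrict_mem (measurableSet_closedBall (x := (0 : EuclideanSpace ℝ (Fin 4))) (ε := R))] with x hx0 hxS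
          have hxn : 0 < ‖x‖ := norm_pos_iff.mpr hx0
          have hxR : ‖x‖ ≤ R := mem_closedBall_zero_iff.mp hxS
          have hle : ‖f x‖ ^ (α + 2) / R ^ (1+b) ≤
              ‖f x‖ ^ (α + 2) / ‖x‖ ^ (1 + b) := by
            apply div_le_div_of_nonneg_left (by positivity) (by positivity)
            exact Real.rpow_le_rpow hxn.le hxR (by positivity)
          calc ENNReal.ofReal ((R ^ (1+b))⁻¹) * ENNReal.ofReal (‖f x‖ ^ (α + 2))
              = ENNReal.ofReal (‖f x‖ ^ (α + 2) / R ^ (1+b)) := by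
                rw [← ENNReal.ofReal_mul (by positivity), inv_mul_eq_div]
            _ ≤ _ := ENNReal.ofReal_le_ofReal hle
  -- final chain
  calc ENNReal.ofReal (c₁ ^ ((α+2)/2) * kball ^ (-(α/2)) * Cu ^ (-(2*α+1+b)) * Nt ^ (3 - 2*s_c))
      = ENNReal.ofReal ((c₁ / w) ^ p / R ^ (1+b)) := by
        rw [real_id c₁ kball Cu Nt s_c α b hc₁ hk hCu hNt0 hα hb hrel]
    _ = ENNReal.ofReal ((R ^ (1+b))⁻¹) * ENNReal.ofReal ((c₁ / w) ^ p) := by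
        rw [← ENNReal.ofReal_mul (by positivity), inv_mul_eq_div]
    _ ≤ ENNReal.ofReal ((R ^ (1+b))⁻¹) * A := mul_le_mul_right hA _
    _ ≤ ∫⁻ x in S, ENNReal.ofReal (‖f x‖ ^ (α + 2) / ‖x‖ ^ (1 + b)) := hstep
    _ ≤ _ := setLIntegral_le_lintegral _ _

theorem stmt_14 (s_c b α : ℝ) (hs : 1 < s_c) (hs2 : s_c < 2)
    (hb : 0 < b) (hb2 : b < 2) (hα : 0 < α)
    (hrel : s_c = 2 - (2 - b) / α)
    (t₀ t₁ : ℝ) (ht : t₀ ≤ t₁)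
    (N : ℝ → ℝ) (hN1 : ∀ t ∈ Set.Icc t₀ t₁, 1 ≤ N t)
    -- `v` denotes the high-frequency part `u_{>N}` of the solution
    (v : ℝ → EuclideanSpace ℝ (Fin 4) → ℂ)
    (Cu : ℝ) (hCu : 0 < Cu) (c₁ : ℝ) (hc₁ : 0 < c₁)
    (hmass : ∀ t ∈ Set.Icc t₀ t₁,
      ENNReal.ofReal c₁ ≤ ENNReal.ofReal (N t ^ (2 * s_c)) *
        ∫⁻ x in {x : EuclideanSpace ℝ (Fin 4) | ‖x‖ ≤ Cu / N t},
          ENNReal.ofReal (‖v t x‖ ^ 2)) :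
    ∃ c₂ : ℝ, 0 < c₂ ∧
      ENNReal.ofReal c₂ *
          ∫⁻ t in Set.Icc t₀ t₁, ENNReal.ofReal (N t ^ (3 - 2 * s_c)) ≤
        ∫⁻ t in Set.Icc t₀ t₁, ∫⁻ x : EuclideanSpace ℝ (Fin 4),
          ENNReal.ofReal (‖v t x‖ ^ (α + 2) / ‖x‖ ^ (1 + b)) := by
  have hk := kball_pos
  have hrel' : s_c * α = 2 * α - 2 + b := by
    rw [hrel]; field_simp; ring
  refine ⟨c₁ ^ ((α+2)/2) * kball ^ (-(α/2)) * Cu ^ (-(2*α+1+b)), by positivity, ?_⟩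
  calc ENNReal.ofReal (c₁ ^ ((α+2)/2) * kball ^ (-(α/2)) * Cu ^ (-(2*α+1+b))) *
        ∫⁻ t in Set.Icc t₀ t₁, ENNReal.ofReal (N t ^ (3 - 2 * s_c))
      ≤ ∫⁻ t in Set.Icc t₀ t₁,
          ENNReal.ofReal (c₁ ^ ((α+2)/2) * kball ^ (-(α/2)) * Cu ^ (-(2*α+1+b))) *
            ENNReal.ofReal (N t ^ (3 - 2 * s_c)) := lintegral_const_mul_le _ _
    _ ≤ _ := by
        refine lintegral_mono_ae ((ae_restrict_iff' measurableSet_Icc).mpr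
          (Filter.Eventually.of_forall fun t htI => ?_))
        rw [← ENNReal.ofReal_mul (by positivity)]
        exact aux_t s_c b α hb hα hrel' Cu c₁ (N t) hCu hc₁ (hN1 t htI) (v t) (hmass t htI)
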